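/- arXiv:1808.03864 — 6 statements merged into one kernel-verified Lean document; each statement's English description precedes it below -/
import Mathlib

section
/- Let f be a nonzero homogeneous polynomial of degree d ≥ 2 in n complex variables. Then there exist x ∈ ℂ^n with ‖x‖₂ = 1 and λ ∈ ℝ such that (1/d)∇f(x) = λ·conj(x) and λ = ‖f‖_{σ,ℂ}. Furthermore, ‖f‖_{σ,ℂ} equals the maximum of |λ| over all pairs (x, λ) with x ∈ ℂ^n, ‖x‖₂ = 1, λ ∈ ℝ, and (1/d)∇f(x) = λ·conj(x). -/
/-!
Let `M` be the maximum of `|f|` on the (compact) unit sphere, attained at `z`. Homogeneity gives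
`f(ωz) = ωᵈ f(z)`, so a phase `ω` with `ωᵈ = |f(z)| / f(z)` yields a unit vector `y = ωz` with
`f(y) = M`; then `y` maximizes `Re f` on the sphere. Lagrange multipliers give `∇f(y) = μ · conj y`
with `μ` real, and Euler's identity `∑ xᵢ ∂ᵢf(x) = d f(x)` pins down `μ = d f(y) = d M`. The same
identity shows that every anti-eigenpair `(x, λ)` has `f(x) = λ`, hence `|λ| ≤ M`.
-/

open MvPolynomial

/-- The Euclidean (Hermitian) norm on `ℂⁿ`. -/
noncomputable def euclNorm {n : ℕ} (x : Fin n → ℂ) : ℝ :=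
  Real.sqrt (∑ i, ‖x i‖ ^ 2)

/-- The complex spectral norm of `f`: the supremum of `|f(x)|` over the unit sphere of `ℂⁿ`. -/
noncomputable def specNorm {n : ℕ} (f : MvPolynomial (Fin n) ℂ) : ℝ :=
  sSup {r : ℝ | ∃ x : Fin n → ℂ, euclNorm x = 1 ∧ r = ‖eval x f‖}

namespace MvPolynomial

section Homogeneous

variable {R σ : Type*} [CommSemiring R] {φ : MvPolynomial σ R} {n : ℕ}

theorem IsHomogeneous.eval_smul (hφ : φ.IsHomogeneous n) (c : R) (x : σ → R) :
    eval (c • x) φ = c ^ n * eval x φ := by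
  rw [eval_eq, eval_eq, Finset.mul_sum]
  refine Finset.sum_congr rfl fun s hs => ?_
  simp only [Pi.smul_apply, smul_eq_mul, mul_pow, Finset.prod_mul_distrib,
    Finset.prod_pow_eq_pow_sum, ← hφ.degree_eq_sum_deg_support hs]
  ring

theorem IsHomogeneous.eval_zero (hφ : φ.IsHomogeneous n) (hn : n ≠ 0) : eval 0 φ = 0 := by
  rw [MvPolynomial.eval_zero, constantCoeff_eq]
  exact hφ.coeff_eq_zero (by simpa using hn.symm)

theorem IsHomogeneous.sum_mul_eval_pderiv [Fintype σ] (hφ : φ.IsHomogeneous n) (x : σ → R) :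
    ∑ i, x i * eval x (pderiv i φ) = n * eval x φ := by
  simpa using congrArg (eval x) hφ.sum_X_mul_pderiv

end Homogeneous

theorem hasStrictFDerivAt_eval {𝕜 σ : Type*} [NontriviallyNormedField 𝕜] [Fintype σ]
    [DecidableEq σ] (p : MvPolynomial σ 𝕜) (x : σ → 𝕜) :
    HasStrictFDerivAt (fun y => eval y p)
      (∑ i, eval x (pderiv i p) • ContinuousLinearMap.proj (R := 𝕜) (φ := fun _ : σ => 𝕜) i) x := by
  induction p using MvPolynomial.induction_on with
  | C a =>
    simp only [eval_C]
    exact (hasStrictFDerivAt_const a x).congr_fderiv (ContinuousLinearMap.ext fun v => by simp)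
  | add p q hp hq =>
    simp only [map_add]
    refine (hp.fun_add hq).congr_fderiv (ContinuousLinearMap.ext fun v => ?_)
    simp [add_mul, Finset.sum_add_distrib]
  | mul_X p i hp =>
    simp only [map_mul, eval_X]
    refine (hp.fun_mul (hasStrictFDerivAt_apply i x)).congr_fderiv
      (ContinuousLinearMap.ext fun v => ?_)
    simp [Pi.single_apply, add_mul, Finset.sum_add_distrib, Finset.mul_sum, apply_ite, mul_assoc]

theorem IsHomogeneous.exists_norm_eq_one_eval_smul_eq_norm {σ : Type*} {φ : MvPolynomial σ ℂ}
    {n : ℕ} (hφ : φ.IsHomogeneous n) (hn : n ≠ 0) (x : σ → ℂ) :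
    ∃ ω : ℂ, ‖ω‖ = 1 ∧ eval (ω • x) φ = ‖eval x φ‖ := by
  by_cases h : eval x φ = 0
  · exact ⟨1, norm_one, by simp [h]⟩
  obtain ⟨ω, hω⟩ :=
    IsAlgClosed.exists_pow_nat_eq ((‖eval x φ‖ : ℂ) / eval x φ) (Nat.pos_of_ne_zero hn)
  refine ⟨ω, ?_, ?_⟩
  · rw [← pow_eq_one_iff_of_nonneg (norm_nonneg ω) hn, ← norm_pow, hω, norm_div,
      Complex.norm_real, norm_norm, div_self (norm_ne_zero_iff.2 h)]
  · rw [hφ.eval_smul, hω, div_mul_cancel₀ _ h]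

end MvPolynomial

theorem Complex.eq_zero_of_forall_re_mul_eq_zero {w : ℂ} (h : ∀ u : ℂ, (w * u).re = 0) :
    w = 0 := by
  have := h (starRingEnd ℂ w)
  rwa [Complex.mul_conj, Complex.ofReal_re, Complex.normSq_eq_zero] at this

section EuclNorm

variable {n : ℕ}

theorem euclNorm_eq_norm_toLp (x : Fin n → ℂ) :
    euclNorm x = ‖(WithLp.toLp 2 x : EuclideanSpace ℂ (Fin n))‖ :=
  (EuclideanSpace.norm_eq _).symm

theorem euclNorm_eq_one_iff {x : Fin n → ℂ} : euclNorm x = 1 ↔ ∑ i, ‖x i‖ ^ 2 = 1 :=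
  Real.sqrt_eq_one

theorem euclNorm_smul (c : ℂ) (x : Fin n → ℂ) : euclNorm (c • x) = ‖c‖ * euclNorm x := by
  rw [euclNorm_eq_norm_toLp, euclNorm_eq_norm_toLp, WithLp.toLp_smul, norm_smul]

theorem isCompact_euclNorm_eq_one : IsCompact {x : Fin n → ℂ | euclNorm x = 1} := by
  convert (EuclideanSpace.equiv (Fin n) ℂ).symm.toHomeomorph.isCompact_preimage.2
    (isCompact_sphere 0 1) using 1
  ext x
  simp [euclNorm_eq_norm_toLp]

theorem exists_euclNorm_eq_one {x : Fin n → ℂ} (hx : x ≠ 0) : ∃ y : Fin n → ℂ, euclNorm y = 1 := by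
  have : Nontrivial (EuclideanSpace ℂ (Fin n)) := ⟨⟨WithLp.toLp 2 x, 0, by simpa using hx⟩⟩
  obtain ⟨u, hu⟩ :=
    (NormedSpace.sphere_nonempty (x := (0 : EuclideanSpace ℂ (Fin n)))).2 zero_le_one
  exact ⟨u.ofLp, by rwa [euclNorm_eq_norm_toLp, ← mem_sphere_zero_iff_norm]⟩

end EuclNorm

theorem MvPolynomial.IsHomogeneous.eval_eq_of_pderiv_eq {n d : ℕ} {f : MvPolynomial (Fin n) ℂ}
    (hf : f.IsHomogeneous d) (hd : d ≠ 0) {x : Fin n → ℂ} (hx : euclNorm x = 1) {c : ℂ}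
    (h : ∀ i, (1 / (d : ℂ)) * eval x (pderiv i f) = c * starRingEnd ℂ (x i)) :
    eval x f = c := by
  have hd' : (d : ℂ) ≠ 0 := Nat.cast_ne_zero.2 hd
  have hgrad : ∀ i, eval x (pderiv i f) = d * c * starRingEnd ℂ (x i) := fun i => by
    rw [mul_assoc, ← h i]; field_simp
  have hsum : ∑ i, (‖x i‖ ^ 2 : ℂ) = 1 := by exact_mod_cast euclNorm_eq_one_iff.1 hx
  apply mul_left_cancel₀ hd'
  calc d * eval x f = ∑ i, x i * eval x (pderiv i f) := (hf.sum_mul_eval_pderiv x).symm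
    _ = d * c * ∑ i, (‖x i‖ ^ 2 : ℂ) := by
      rw [Finset.mul_sum]
      exact Finset.sum_congr rfl fun i _ => by rw [hgrad, ← Complex.mul_conj']; ring
    _ = d * c := by rw [hsum, mul_one]

theorem exists_pderiv_eq_smul_conj_of_isMaxOn {n : ℕ} (p : MvPolynomial (Fin n) ℂ)
    {y : Fin n → ℂ} (hy : euclNorm y = 1)
    (hmax : IsMaxOn (fun x => (eval x p).re) {x | euclNorm x = 1} y) :
    ∃ μ : ℝ, ∀ i, eval y (pderiv i p) = μ * starRingEnd ℂ (y i) := by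
  have hg : HasStrictFDerivAt (fun x : Fin n → ℂ => ∑ i, ‖x i‖ ^ 2)
      (∑ i, (2 • innerSL ℝ (y i)).comp (ContinuousLinearMap.proj i)) y :=
    HasStrictFDerivAt.fun_sum fun i _ =>
      (hasStrictFDerivAt_norm_sq (y i)).comp y (hasStrictFDerivAt_apply (𝕜 := ℝ) i y)
  have hφ := Complex.reCLM.hasStrictFDerivAt.comp y
    ((hasStrictFDerivAt_eval p y).restrictScalars ℝ)
  have hlevel : {x : Fin n → ℂ | ∑ i, ‖x i‖ ^ 2 = ∑ i, ‖y i‖ ^ 2} = {x | euclNorm x = 1} := by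
    ext x; simp [euclNorm_eq_one_iff.1 hy, euclNorm_eq_one_iff]
  rw [← hlevel] at hmax
  obtain ⟨a, b, hab, hlin⟩ :=
    IsLocalExtrOn.exists_multipliers_of_hasStrictFDerivAt_1d (.inr hmax.localize) hg hφ
  have hcoord : ∀ j (u : ℂ),
      ((2 * a * starRingEnd ℂ (y j) + b * eval y (pderiv j p)) * u).re = 0 := fun j u => by
    simpa [Pi.single_apply, Complex.inner, apply_ite, Complex.mul_re, add_mul, mul_add, mul_assoc,
      mul_comm, mul_left_comm, sub_eq_add_neg] using congrArg (· (Pi.single j u)) hlin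
  have hcoeff : ∀ j, 2 * a * starRingEnd ℂ (y j) + b * eval y (pderiv j p) = 0 := fun j =>
    Complex.eq_zero_of_forall_re_mul_eq_zero (hcoord j)
  have hb : b ≠ 0 := by
    rintro rfl
    have ha : a ≠ 0 := by simpa using hab
    have : y = 0 := funext fun j => by simpa [ha] using hcoeff j
    simp [this, euclNorm] at hy
  have hb' : (b : ℂ) ≠ 0 := Complex.ofReal_ne_zero.2 hb
  refine ⟨-2 * a / b, fun j => ?_⟩
  push_cast
  field_simp
  linear_combination hcoeff j

theorem MvPolynomial.IsHomogeneous.exists_eval_eq_specNorm {n d : ℕ}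
    {f : MvPolynomial (Fin n) ℂ} (hf : f.IsHomogeneous d) (hd : d ≠ 0) (hf₀ : f ≠ 0) :
    ∃ y, euclNorm y = 1 ∧ eval y f = specNorm f ∧
      ∀ x, euclNorm x = 1 → ‖eval x f‖ ≤ specNorm f := by
  obtain ⟨x₀, hx₀⟩ : ∃ x, eval x f ≠ 0 := by
    by_contra! h
    exact hf₀ (hf.eq_zero_of_forall_eval_eq_zero h)
  obtain ⟨u, hu⟩ := exists_euclNorm_eq_one (x := x₀) fun h => hx₀ (h ▸ hf.eval_zero hd)
  obtain ⟨z, hz, hzmax⟩ := isCompact_euclNorm_eq_one.exists_isMaxOn ⟨u, hu⟩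
    (continuous_norm.comp (continuous_eval f)).continuousOn
  have hspec : specNorm f = ‖eval z f‖ :=
    IsGreatest.csSup_eq ⟨⟨z, hz, rfl⟩, by rintro r ⟨x, hx, rfl⟩; exact hzmax hx⟩
  obtain ⟨ω, hω, hωz⟩ := hf.exists_norm_eq_one_eval_smul_eq_norm hd z
  exact ⟨ω • z, by rw [euclNorm_smul, hω, hz, one_mul], by rw [hωz, hspec],
    fun x hx => hspec ▸ hzmax hx⟩

/-- For a nonzero homogeneous `f` of degree `d ≥ 2` there is a unit vector `x` with
`(1/d)∇f(x) = ‖f‖_{σ,ℂ} ⬝ conj x`, and `‖f‖_{σ,ℂ}` is the maximum of `|λ|` over all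
anti-eigenpairs `(x, λ)`. -/
theorem stmt2 {n d : ℕ} (hd : 2 ≤ d) (f : MvPolynomial (Fin n) ℂ) (hf : f ≠ 0)
    (hhom : f.IsHomogeneous d) :
    (∃ x : Fin n → ℂ, euclNorm x = 1 ∧
      ∀ i, (1 / (d : ℂ)) * eval x (pderiv i f) =
        ((specNorm f : ℝ) : ℂ) * (starRingEnd ℂ) (x i)) ∧
    IsGreatest {r : ℝ | ∃ (x : Fin n → ℂ) (lam : ℝ), euclNorm x = 1 ∧
        (∀ i, (1 / (d : ℂ)) * eval x (pderiv i f) = (lam : ℂ) * (starRingEnd ℂ) (x i)) ∧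
        r = |lam|}
      (specNorm f) := by
  have hd0 : d ≠ 0 := by omega
  obtain ⟨y, hy, hfy, hmax⟩ := hhom.exists_eval_eq_specNorm hd0 hf
  have hymax : IsMaxOn (fun x => (eval x f).re) {x | euclNorm x = 1} y := fun x hx =>
    calc (eval x f).re ≤ ‖eval x f‖ := Complex.re_le_norm _
      _ ≤ specNorm f := hmax x hx
      _ = (eval y f).re := by rw [hfy, Complex.ofReal_re]
  obtain ⟨μ, hμ⟩ := exists_pderiv_eq_smul_conj_of_isMaxOn f hy hymax
  have hyeig : ∀ i, 1 / (d : ℂ) * eval y (pderiv i f) =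
      ((μ / d : ℝ) : ℂ) * starRingEnd ℂ (y i) := fun i => by
    rw [hμ]; push_cast; ring
  have hμd : μ / d = specNorm f :=
    Complex.ofReal_inj.1 ((hhom.eval_eq_of_pderiv_eq hd0 hy hyeig).symm.trans hfy)
  rw [hμd] at hyeig
  have hnonneg : 0 ≤ specNorm f := (norm_nonneg _).trans (hmax y hy)
  refine ⟨⟨y, hy, hyeig⟩, ⟨y, specNorm f, hy, hyeig, (abs_of_nonneg hnonneg).symm⟩, ?_⟩
  rintro r ⟨x, lam, hx, hlam, rfl⟩
  calc |lam| = ‖eval x f‖ := by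
        rw [hhom.eval_eq_of_pderiv_eq hd0 hx hlam, Complex.norm_real, Real.norm_eq_abs]
    _ ≤ specNorm f := hmax x hx
end

section
/- Let f be a nonzero homogeneous polynomial of degree d ≥ 2 in n real variables. Then there exist x ∈ ℝ^n with ‖x‖₂ = 1 and λ ∈ ℝ such that (1/d)∇f(x) = λ·x and |λ| = ‖f‖_{σ,ℝ}. Furthermore, ‖f‖_{σ,ℝ} equals the maximum of |λ| over all pairs (x, λ) with x ∈ ℝ^n, ‖x‖₂ = 1, λ ∈ ℝ, and (1/d)∇f(x) = λ·x. -/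
open MvPolynomial

/-- The Euclidean norm on `ℝⁿ`. -/
noncomputable def euclNormR {n : ℕ} (x : Fin n → ℝ) : ℝ :=
  Real.sqrt (∑ i, x i ^ 2)

/-- The real spectral norm of `f`: the supremum of `|f(x)|` over the unit sphere of `ℝⁿ`. -/
noncomputable def specNormR {n : ℕ} (f : MvPolynomial (Fin n) ℝ) : ℝ :=
  sSup {r : ℝ | ∃ x : Fin n → ℝ, euclNormR x = 1 ∧ r = |eval x f|}

/- helpers -/
lemma degree_eq_sum_univ {n : ℕ} (m : Fin n →₀ ℕ) : m.degree = ∑ i, m i := by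
  rw [Finsupp.degree]
  exact Finset.sum_subset (Finset.subset_univ _) (fun i _ hi => Finsupp.notMem_support_iff.mp hi)

/-- Homogeneous scaling of evaluation. -/
lemma eval_mul_smul {n d : ℕ} {f : MvPolynomial (Fin n) ℝ} (hf : f.IsHomogeneous d)
    (c : ℝ) (y : Fin n → ℝ) : eval (fun i => c * y i) f = c ^ d * eval y f := by
  rw [eval_eq', eval_eq', Finset.mul_sum]
  refine Finset.sum_congr rfl fun m hm => ?_
  have hdeg : m.degree = d := by
    by_contra h
    exact (mem_support_iff.mp hm) (hf.coeff_eq_zero h)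
  simp_rw [mul_pow]
  rw [Finset.prod_mul_distrib, Finset.prod_pow_eq_pow_sum, ← degree_eq_sum_univ, hdeg]
  ring

lemma euler_mono {n : ℕ} (m : Fin n →₀ ℕ) (a : ℝ) (x : Fin n → ℝ) (i : Fin n) :
    x i * eval x (pderiv i (monomial m a)) = (m i : ℝ) * eval x (monomial m a) := by
  rcases Nat.eq_zero_or_pos (m i) with h | h
  · simp [pderiv_monomial, h]
  · have hk : ∀ j, ((m - Finsupp.single i 1 : Fin n →₀ ℕ)) j = m j - (if j = i then 1 else 0) := by
      intro j; rw [Finsupp.tsub_apply, Finsupp.single_apply]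
      congr 1
      exact if_congr (eq_comm) rfl rfl
    rw [pderiv_monomial, eval_monomial, eval_monomial]
    rw [Finsupp.prod_fintype _ _ (fun j => pow_zero (x j)),
        Finsupp.prod_fintype _ _ (fun j => pow_zero (x j))]
    rw [← Finset.prod_erase_mul Finset.univ _ (Finset.mem_univ i),
        ← Finset.prod_erase_mul Finset.univ _ (Finset.mem_univ i)]
    have h1 : ∀ j ∈ Finset.univ.erase i, x j ^ (((m - Finsupp.single i 1 : Fin n →₀ ℕ)) j) = x j ^ m j := by
      intro j hj
      rw [hk j, if_neg (Finset.mem_erase.mp hj).1, Nat.sub_zero]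
    rw [Finset.prod_congr rfl h1]
    have h2 : ((m - Finsupp.single i 1 : Fin n →₀ ℕ)) i = m i - 1 := by rw [hk i, if_pos rfl]
    rw [h2]
    have h3 : x i * x i ^ (m i - 1) = x i ^ m i := by
      conv_rhs => rw [← Nat.succ_pred_eq_of_pos h]
      rw [pow_succ, Nat.pred_eq_sub_one]
      ring
    push_cast
    calc x i * (a * (m i : ℝ) * ((∏ j ∈ Finset.univ.erase i, x j ^ m j) * x i ^ (m i - 1)))
        = (m i : ℝ) * (a * ((∏ j ∈ Finset.univ.erase i, x j ^ m j) * (x i * x i ^ (m i - 1)))) := by ring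
      _ = (m i : ℝ) * (a * ((∏ j ∈ Finset.univ.erase i, x j ^ m j) * x i ^ m i)) := by rw [h3]

/-- Euler's identity. -/
lemma euler_identity {n d : ℕ} {f : MvPolynomial (Fin n) ℝ} (hf : f.IsHomogeneous d)
    (x : Fin n → ℝ) : ∑ i, x i * eval x (pderiv i f) = (d : ℝ) * eval x f := by
  have key : ∀ m ∈ f.support, ∑ i, x i * eval x (pderiv i (monomial m (coeff m f)))
      = (d : ℝ) * eval x (monomial m (coeff m f)) := by
    intro m hm
    have hdeg : m.degree = d := by
      by_contra h
      exact (mem_support_iff.mp hm) (hf.coeff_eq_zero h)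
    simp_rw [euler_mono]
    rw [← Finset.sum_mul]
    congr 1
    rw [← Nat.cast_sum, ← degree_eq_sum_univ, hdeg]
  calc ∑ i, x i * eval x (pderiv i f)
      = ∑ i, x i * eval x (pderiv i (∑ m ∈ f.support, monomial m (coeff m f))) := by
        rw [← f.as_sum]
    _ = ∑ m ∈ f.support, ∑ i, x i * eval x (pderiv i (monomial m (coeff m f))) := by
        simp_rw [map_sum, Finset.mul_sum]; rw [Finset.sum_comm]
    _ = ∑ m ∈ f.support, (d : ℝ) * eval x (monomial m (coeff m f)) := Finset.sum_congr rfl key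
    _ = (d : ℝ) * eval x f := by rw [← Finset.mul_sum, ← map_sum, ← f.as_sum]

noncomputable def sliceA {n : ℕ} (x : Fin n → ℝ) (i : Fin n) :
    MvPolynomial (Fin n) ℝ →ₐ[ℝ] Polynomial ℝ :=
  aeval (fun j => if j = i then Polynomial.X else Polynomial.C (x j))

lemma sliceA_derivative {n : ℕ} (x : Fin n → ℝ) (i : Fin n) (f : MvPolynomial (Fin n) ℝ) :
    Polynomial.derivative (sliceA x i f) = sliceA x i (pderiv i f) := by
  induction f using MvPolynomial.induction_on with
  | C a => simp [sliceA]
  | add p q hp hq => simp [map_add, hp, hq]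
  | mul_X p j hp =>
      rw [map_mul, Polynomial.derivative_mul, hp, pderiv_mul, map_add, map_mul, map_mul]
      congr 1
      simp only [sliceA, aeval_X]
      by_cases hj : j = i
      · subst hj
        rw [if_pos rfl, Polynomial.derivative_X, pderiv_X_self, map_one]
      · rw [if_neg hj, Polynomial.derivative_C, pderiv_X_of_ne hj, map_zero]

lemma sliceA_eval {n : ℕ} (x : Fin n → ℝ) (i : Fin n) (f : MvPolynomial (Fin n) ℝ) (t : ℝ) :
    Polynomial.eval t (sliceA x i f) = eval (Function.update x i t) f := by
  induction f using MvPolynomial.induction_on with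
  | C a => simp [sliceA]
  | add p q hp hq => simp [map_add, hp, hq]
  | mul_X p j hp =>
      rw [map_mul, Polynomial.eval_mul, hp, map_mul]
      congr 1
      simp only [sliceA, aeval_X, eval_X]
      by_cases hj : j = i
      · subst hj; rw [if_pos rfl, Polynomial.eval_X, Function.update_self]
      · rw [if_neg hj, Polynomial.eval_C, Function.update_of_ne hj]

lemma hasDerivAt_eval_update {n : ℕ} (x : Fin n → ℝ) (i : Fin n) (f : MvPolynomial (Fin n) ℝ) :
    HasDerivAt (fun t => eval (Function.update x i t) f) (eval x (pderiv i f)) (x i) := by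
  have h := Polynomial.hasDerivAt (sliceA x i f) (x i)
  have heq : (fun t => Polynomial.eval t (sliceA x i f))
      = fun t => eval (Function.update x i t) f := funext (sliceA_eval x i f)
  rw [heq] at h
  have hval : Polynomial.eval (x i) (Polynomial.derivative (sliceA x i f))
      = eval x (pderiv i f) := by
    rw [sliceA_derivative, sliceA_eval, Function.update_eq_self]
  rwa [hval] at h

/-- For a nonzero homogeneous `f` of degree `d ≥ 2` in `n` real variables there is a unit
vector `x` and real `λ` with `(1/d)∇f(x) = λ x` and `|λ| = ‖f‖_{σ,ℝ}`, and `‖f‖_{σ,ℝ}` is the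
maximum of `|λ|` over all eigenpairs `(x, λ)`. -/
theorem stmt3 {n d : ℕ} (hd : 2 ≤ d) (f : MvPolynomial (Fin n) ℝ) (hf : f ≠ 0)
    (hhom : f.IsHomogeneous d) :
    (∃ (x : Fin n → ℝ) (lam : ℝ), euclNormR x = 1 ∧
      (∀ i, (1 / (d : ℝ)) * eval x (pderiv i f) = lam * x i) ∧ |lam| = specNormR f) ∧
    IsGreatest {r : ℝ | ∃ (x : Fin n → ℝ) (lam : ℝ), euclNormR x = 1 ∧
        (∀ i, (1 / (d : ℝ)) * eval x (pderiv i f) = lam * x i) ∧ r = |lam|}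
      (specNormR f) := by
  have hdR : (d : ℝ) ≠ 0 := Nat.cast_ne_zero.mpr (by omega)
  -- dispose of n = 0
  rcases Nat.eq_zero_or_pos n with hn0 | hn
  · exfalso
    subst hn0
    apply hf
    ext m
    have hm0 : m = 0 := by ext i; exact i.elim0
    rw [hm0, coeff_zero]
    apply hhom.coeff_eq_zero
    rw [map_zero]
    omega
  -- the sphere
  set S : Set (Fin n → ℝ) := {x | euclNormR x = 1} with hSdef
  have hsum : ∀ x ∈ S, ∑ i, x i ^ 2 = 1 := by
    intro x hx
    have h0 : (0:ℝ) ≤ ∑ i, x i ^ 2 := by positivity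
    have hx' : Real.sqrt (∑ i, x i ^ 2) = 1 := hx
    rw [← Real.sq_sqrt h0, hx', one_pow]
  have hmemS : ∀ x : Fin n → ℝ, (∑ i, x i ^ 2 = 1) → x ∈ S := by
    intro x hx
    show Real.sqrt _ = 1
    rw [hx, Real.sqrt_one]
  have hScl : IsClosed S := by
    have : Continuous fun x : Fin n → ℝ => euclNormR x :=
      Real.continuous_sqrt.comp (continuous_finset_sum _ fun i _ => (continuous_apply i).pow 2)
    exact isClosed_eq this continuous_const
  have hSbd : Bornology.IsBounded S := by
    apply (Metric.isBounded_closedBall (x := (0 : Fin n → ℝ)) (r := 1)).subset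
    intro x hx
    rw [Metric.mem_closedBall, dist_zero_right]
    rw [pi_norm_le_iff_of_nonneg zero_le_one]
    intro i
    have h1 : x i ^ 2 ≤ 1 := by
      rw [← hsum x hx]
      exact Finset.single_le_sum (fun j _ => sq_nonneg (x j)) (Finset.mem_univ i)
    rw [Real.norm_eq_abs]
    nlinarith [abs_nonneg (x i), sq_abs (x i)]
  have hScomp : IsCompact S := Metric.isCompact_of_isClosed_isBounded hScl hSbd
  have hSne : S.Nonempty := by
    refine ⟨fun j => if j = ⟨0, hn⟩ then 1 else 0, hmemS _ ?_⟩
    rw [Finset.sum_eq_single ⟨0, hn⟩]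
    · rw [if_pos rfl, one_pow]
    · intro j _ hj; rw [if_neg hj]; ring
    · intro h; exact absurd (Finset.mem_univ _) h
  have hcont : Continuous fun x : Fin n → ℝ => |eval x f| :=
    (MvPolynomial.continuous_eval (p := f)).abs
  obtain ⟨x₀, hx₀S, hmax⟩ := hScomp.exists_isMaxOn hSne hcont.continuousOn
  set M : ℝ := |eval x₀ f| with hMdef
  have hgreat : IsGreatest {r : ℝ | ∃ x : Fin n → ℝ, euclNormR x = 1 ∧ r = |eval x f|} M := by
    constructor
    · exact ⟨x₀, hx₀S, rfl⟩
    · rintro r ⟨x, hx, rfl⟩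
      exact hmax hx
  have hspec : specNormR f = M := hgreat.csSup_eq
  -- M > 0
  obtain ⟨y, hy⟩ : ∃ y, eval y f ≠ 0 := by
    by_contra h
    push_neg at h
    exact hf (hhom.eq_zero_of_forall_eval_eq_zero h)
  have hsy : 0 < ∑ i, y i ^ 2 := by
    rcases (show (0:ℝ) ≤ ∑ i, y i ^ 2 by positivity).eq_or_lt with h | h
    · exfalso
      apply hy
      have hzero : ∀ i, y i = 0 := by
        intro i
        have := (Finset.sum_eq_zero_iff_of_nonneg
          (fun j _ => sq_nonneg (y j))).mp h.symm i (Finset.mem_univ i)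
        exact (pow_eq_zero_iff two_ne_zero).mp this
      have : y = fun i => (0:ℝ) * y i := funext fun i => by rw [zero_mul, hzero i]
      rw [this, eval_mul_smul hhom, zero_pow (by omega : d ≠ 0), zero_mul]
    · exact h
  set r : ℝ := Real.sqrt (∑ i, y i ^ 2) with hrdef
  have hr : 0 < r := Real.sqrt_pos.mpr hsy
  have hr2 : r ^ 2 = ∑ i, y i ^ 2 := Real.sq_sqrt hsy.le
  have huS : (fun i => r⁻¹ * y i) ∈ S := by
    apply hmemS
    simp_rw [mul_pow, ← Finset.mul_sum, ← hr2]
    field_simp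
  have huf : eval (fun i => r⁻¹ * y i) f ≠ 0 := by
    rw [eval_mul_smul hhom]
    exact mul_ne_zero (pow_ne_zero _ (inv_ne_zero hr.ne')) hy
  have hMpos : 0 < M := lt_of_lt_of_le (abs_pos.mpr huf) (hmax huS)
  -- the auxiliary polynomial
  set g : MvPolynomial (Fin n) ℝ := ∑ j, X j ^ 2 with hgdef
  set H : MvPolynomial (Fin n) ℝ := C (M ^ 2) * g ^ d - f ^ 2 with hHdef
  have hevalg : ∀ z : Fin n → ℝ, eval z g = ∑ j, z j ^ 2 := by
    intro z; simp [hgdef]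
  have hHeval : ∀ z : Fin n → ℝ, eval z H = M ^ 2 * (∑ j, z j ^ 2) ^ d - (eval z f) ^ 2 := by
    intro z; simp [hHdef, hevalg z]
  have hHnn : ∀ z : Fin n → ℝ, 0 ≤ eval z H := by
    intro z
    rw [hHeval]
    rcases (show (0:ℝ) ≤ ∑ i, z i ^ 2 by positivity).eq_or_lt with h | h
    · have hzero : ∀ i, z i = 0 := by
        intro i
        have := (Finset.sum_eq_zero_iff_of_nonneg
          (fun j _ => sq_nonneg (z j))).mp h.symm i (Finset.mem_univ i)
        exact (pow_eq_zero_iff two_ne_zero).mp this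
      have hz : z = fun i => (0:ℝ) * z i := funext fun i => by rw [zero_mul, hzero i]
      have hf0 : eval z f = 0 := by
        conv_lhs => rw [hz]
        rw [eval_mul_smul hhom, zero_pow (by omega : d ≠ 0), zero_mul]
      rw [hf0, ← h]
      norm_num [zero_pow (show d ≠ 0 by omega)]
    · set ρ : ℝ := Real.sqrt (∑ i, z i ^ 2) with hρdef
      have hρ : 0 < ρ := Real.sqrt_pos.mpr h
      have hρ2 : ρ ^ 2 = ∑ i, z i ^ 2 := Real.sq_sqrt h.le
      have huS' : (fun i => ρ⁻¹ * z i) ∈ S := by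
        apply hmemS
        simp_rw [mul_pow, ← Finset.mul_sum, ← hρ2]
        field_simp
      have hle : |eval (fun i => ρ⁻¹ * z i) f| ≤ M := hmax huS'
      have hz : z = fun i => ρ * (ρ⁻¹ * z i) := funext fun i => by field_simp
      have heval : eval z f = ρ ^ d * eval (fun i => ρ⁻¹ * z i) f := by
        conv_lhs => rw [hz]
        exact eval_mul_smul hhom ρ _
      set c : ℝ := eval (fun i => ρ⁻¹ * z i) f
      have hc2 : c ^ 2 ≤ M ^ 2 := by rw [← sq_abs c]; exact pow_le_pow_left₀ (abs_nonneg c) hle 2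
      rw [heval, ← hρ2]
      have : (ρ ^ d * c) ^ 2 = (ρ ^ 2) ^ d * c ^ 2 := by
        rw [mul_pow, ← pow_mul, ← pow_mul, Nat.mul_comm]
      rw [this]
      nlinarith [pow_nonneg (sq_nonneg ρ) d]
  have hHx0 : eval x₀ H = 0 := by
    rw [hHeval, hsum x₀ hx₀S, one_pow, mul_one, ← sq_abs (eval x₀ f), ← hMdef, sub_self]
  have hgrad : ∀ i, eval x₀ (pderiv i H) = 0 := by
    intro i
    have hloc : IsLocalMin (fun t => eval (Function.update x₀ i t) H) (x₀ i) := by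
      apply Filter.Eventually.of_forall
      intro t
      simp only [Function.update_eq_self, hHx0]
      exact hHnn _
    exact hloc.hasDerivAt_eq_zero (hasDerivAt_eval_update x₀ i H)
  -- compute the gradient equation
  have hpdg : ∀ i, eval x₀ (pderiv i g) = 2 * x₀ i := by
    intro i
    rw [hgdef, map_sum, map_sum]
    rw [Finset.sum_eq_single i]
    · rw [pderiv_pow, pderiv_X_self]
      simp
    · intro j _ hj
      rw [pderiv_pow, pderiv_X_of_ne hj]
      simp
    · intro h; exact absurd (Finset.mem_univ _) h
  have hpd : ∀ i, eval x₀ f * eval x₀ (pderiv i f) = (d:ℝ) * M ^ 2 * x₀ i := by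
    intro i
    have h1 : pderiv i H = C (M ^ 2) * ((d:MvPolynomial (Fin n) ℝ) * g ^ (d-1) * pderiv i g)
        - 2 * f ^ (2-1) * pderiv i f := by
      rw [hHdef, map_sub, pderiv_C_mul, pderiv_pow, pderiv_pow]
      norm_num
    have h2 := hgrad i
    rw [h1] at h2
    simp only [map_sub, map_mul, eval_C, map_pow, map_ofNat] at h2
    rw [hevalg, hsum x₀ hx₀S, one_pow, hpdg i] at h2
    have : (eval x₀ ((d : MvPolynomial (Fin n) ℝ))) = (d : ℝ) := by
      simp
    rw [this] at h2
    norm_num at h2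
    linear_combination (-1/2 : ℝ) * h2
  set lam : ℝ := eval x₀ f with hlamdef
  have hlamabs : |lam| = M := hMdef.symm
  have hlam0 : lam ≠ 0 := by
    intro h
    rw [h, abs_zero] at hlamabs
    exact hMpos.ne hlamabs
  have hM2 : M ^ 2 = lam ^ 2 := by rw [← hlamabs, sq_abs]
  have heig : ∀ i, (1 / (d : ℝ)) * eval x₀ (pderiv i f) = lam * x₀ i := by
    intro i
    have h := hpd i
    rw [hM2] at h
    have h3 : eval x₀ (pderiv i f) = (d:ℝ) * lam * x₀ i := by
      apply mul_left_cancel₀ hlam0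
      rw [h]; ring
    rw [h3]
    field_simp
  refine ⟨⟨x₀, lam, hx₀S, heig, hlamabs.trans hspec.symm⟩, ?_, ?_⟩
  · exact ⟨x₀, lam, hx₀S, heig, hspec.trans hlamabs.symm⟩
  · rintro s ⟨x, lam', hx, heig', rfl⟩
    have hxS : x ∈ S := hx
    have hsum' := hsum x hxS
    have hlam' : lam' = eval x f := by
      have heuler := euler_identity hhom x
      calc lam' = lam' * ∑ i, x i ^ 2 := by rw [hsum', mul_one]
        _ = ∑ i, (lam' * x i) * x i := by
            rw [Finset.mul_sum]; exact Finset.sum_congr rfl fun i _ => by ring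
        _ = ∑ i, ((1 / (d : ℝ)) * eval x (pderiv i f)) * x i := by
            exact Finset.sum_congr rfl fun i _ => by rw [heig' i]
        _ = (1 / (d : ℝ)) * ∑ i, x i * eval x (pderiv i f) := by
            rw [Finset.mul_sum]; exact Finset.sum_congr rfl fun i _ => by ring
        _ = (1 / (d : ℝ)) * ((d : ℝ) * eval x f) := by rw [heuler]
        _ = eval x f := by field_simp
    rw [hlam', hspec]
    exact hmax hxS
end

section
/- Assume s ≠ (0,…,0,s_d), i.e., q is not the zero polynomial. Suppose x = (x₁,x₂) ∈ ℂ² \ {(0,0)} satisfies F(x) = x. If x₁ ≠ 0, then z = x₂/x₁ satisfies z·q(z) − p(z) = 0 and q(z) ≠ 0, and x₁^{d−2} = 1/q(z); conversely, for each z ∈ ℂ with z·q(z) − p(z) = 0 and q(z) ≠ 0, the nonzero fixed points of F of the form (x₁, x₁·z) are exactly the d−2 points with x₁^{d−2} = 1/q(z). If x₁ = 0, then s_{d−1} = 0 and s_d ≠ 0; conversely, if s_{d−1} = 0 and s_d ≠ 0, then the nonzero fixed points of F of the form (0, x₂) are exactly the d−2 points with x₂^{d−2} = 1/s_d. -/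
noncomputable section

/-- `p(z) = Σ_{j=0}^{d-1} C(d-1,j) s_{j+1} z^j`. -/
def pP (d : ℕ) (s : ℕ → ℂ) : Polynomial ℂ :=
  ∑ j ∈ Finset.range d, Polynomial.C (((d - 1).choose j : ℂ) * s (j + 1)) * Polynomial.X ^ j

/-- `q(z) = Σ_{j=0}^{d-1} C(d-1,j) s_j z^j`. -/
def qP (d : ℕ) (s : ℕ → ℂ) : Polynomial ℂ :=
  ∑ j ∈ Finset.range d, Polynomial.C (((d - 1).choose j : ℂ) * s j) * Polynomial.X ^ j

/-- First component of `F = (1/d)∇f`, `F₁(x₁,x₂) = Σ_{j=0}^{d-1} C(d-1,j) s_j x₁^{d-1-j} x₂^j`. -/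
def F1 (d : ℕ) (s : ℕ → ℂ) (x₁ x₂ : ℂ) : ℂ :=
  ∑ j ∈ Finset.range d, ((d - 1).choose j : ℂ) * s j * x₁ ^ (d - 1 - j) * x₂ ^ j

/-- Second component of `F = (1/d)∇f`,
`F₂(x₁,x₂) = Σ_{j=0}^{d-1} C(d-1,j) s_{j+1} x₁^{d-1-j} x₂^j`. -/
def F2 (d : ℕ) (s : ℕ → ℂ) (x₁ x₂ : ℂ) : ℂ :=
  ∑ j ∈ Finset.range d, ((d - 1).choose j : ℂ) * s (j + 1) * x₁ ^ (d - 1 - j) * x₂ ^ j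

lemma ncard_pow_eq {n : ℕ} (hn : 0 < n) {c : ℂ} (hc : c ≠ 0) :
    {x : ℂ | x ^ n = c}.ncard = n := by
  have hp : IsPrimitiveRoot (Complex.exp (2 * Real.pi * Complex.I / n)) n :=
    Complex.isPrimitiveRoot_exp n hn.ne'
  have hset : {x : ℂ | x ^ n = c} = ↑(Polynomial.nthRoots n c).toFinset := by
    ext x
    simp [Polynomial.mem_nthRoots hn]
  rw [hset, Set.ncard_coe_finset,
    Multiset.toFinset_card_of_nodup (hp.nthRoots_nodup hc), hp.card_nthRoots, if_pos]
  exact IsAlgClosed.exists_pow_nat_eq c hn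

lemma F1_eq (d : ℕ) (s : ℕ → ℂ) (x₁ x₂ : ℂ) (h : x₁ ≠ 0) :
    F1 d s x₁ x₂ = x₁ ^ (d - 1) * (qP d s).eval (x₂ / x₁) := by
  unfold F1 qP
  rw [Polynomial.eval_finset_sum, Finset.mul_sum]
  refine Finset.sum_congr rfl fun j hj => ?_
  have hj' : j ≤ d - 1 := by have := Finset.mem_range.mp hj; omega
  simp only [Polynomial.eval_mul, Polynomial.eval_C, Polynomial.eval_pow, Polynomial.eval_X]
  rw [div_pow, pow_sub₀ x₁ h hj']
  field_simp

lemma F2_eq (d : ℕ) (s : ℕ → ℂ) (x₁ x₂ : ℂ) (h : x₁ ≠ 0) :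
    F2 d s x₁ x₂ = x₁ ^ (d - 1) * (pP d s).eval (x₂ / x₁) := by
  unfold F2 pP
  rw [Polynomial.eval_finset_sum, Finset.mul_sum]
  refine Finset.sum_congr rfl fun j hj => ?_
  have hj' : j ≤ d - 1 := by have := Finset.mem_range.mp hj; omega
  simp only [Polynomial.eval_mul, Polynomial.eval_C, Polynomial.eval_pow, Polynomial.eval_X]
  rw [div_pow, pow_sub₀ x₁ h hj']
  field_simp

lemma F1_zero (d : ℕ) (hd : 1 ≤ d) (s : ℕ → ℂ) (x₂ : ℂ) :
    F1 d s 0 x₂ = s (d - 1) * x₂ ^ (d - 1) := by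
  unfold F1
  rw [Finset.sum_eq_single (d - 1)]
  · simp
  · intro j hj hne
    have hj' : j < d := Finset.mem_range.mp hj
    have : d - 1 - j ≠ 0 := by omega
    simp [zero_pow this]
  · intro h
    exact absurd (Finset.mem_range.mpr (by omega)) h

lemma F2_zero (d : ℕ) (hd : 1 ≤ d) (s : ℕ → ℂ) (x₂ : ℂ) :
    F2 d s 0 x₂ = s d * x₂ ^ (d - 1) := by
  unfold F2
  rw [Finset.sum_eq_single (d - 1)]
  · have h : d - 1 + 1 = d := by omega
    simp [h]
  · intro j hj hne
    have hj' : j < d := Finset.mem_range.mp hj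
    have : d - 1 - j ≠ 0 := by omega
    simp [zero_pow this]
  · intro h
    exact absurd (Finset.mem_range.mpr (by omega)) h

/-- Description of the nonzero fixed points of `F` for a symmetric `d`-qubit with `q ≠ 0`. -/
theorem stmt10 (d : ℕ) (hd : 3 ≤ d) (s : ℕ → ℂ) (hq : qP d s ≠ 0) :
    (∀ x₁ x₂ : ℂ, x₁ ≠ 0 → F1 d s x₁ x₂ = x₁ → F2 d s x₁ x₂ = x₂ →
      (x₂ / x₁) * (qP d s).eval (x₂ / x₁) - (pP d s).eval (x₂ / x₁) = 0 ∧
      (qP d s).eval (x₂ / x₁) ≠ 0 ∧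
      x₁ ^ (d - 2) = 1 / (qP d s).eval (x₂ / x₁)) ∧
    (∀ z : ℂ, z * (qP d s).eval z - (pP d s).eval z = 0 → (qP d s).eval z ≠ 0 →
      (∀ x₁ : ℂ, (x₁ ≠ 0 ∧ F1 d s x₁ (x₁ * z) = x₁ ∧ F2 d s x₁ (x₁ * z) = x₁ * z) ↔
        x₁ ^ (d - 2) = 1 / (qP d s).eval z) ∧
      {x₁ : ℂ | x₁ ^ (d - 2) = 1 / (qP d s).eval z}.ncard = d - 2) ∧
    (∀ x₂ : ℂ, x₂ ≠ 0 → F1 d s 0 x₂ = 0 → F2 d s 0 x₂ = x₂ →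
      s (d - 1) = 0 ∧ s d ≠ 0) ∧
    (s (d - 1) = 0 → s d ≠ 0 →
      (∀ x₂ : ℂ, (x₂ ≠ 0 ∧ F1 d s 0 x₂ = 0 ∧ F2 d s 0 x₂ = x₂) ↔
        x₂ ^ (d - 2) = 1 / s d) ∧
      {x₂ : ℂ | x₂ ^ (d - 2) = 1 / s d}.ncard = d - 2) := by
  have hd1 : (1 : ℕ) ≤ d := by omega
  have hd2 : 0 < d - 2 := by omega
  have hpow : ∀ x : ℂ, x ^ (d - 1) = x ^ (d - 2) * x := by
    intro x
    rw [← pow_succ]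
    congr 1
    omega
  refine ⟨?_, ?_, ?_, ?_⟩
  · -- Part 1 : x₁ ≠ 0 fixed points give roots of zq - p with q ≠ 0
    intro x₁ x₂ hx₁ h1 h2
    rw [F1_eq d s x₁ x₂ hx₁, hpow] at h1
    rw [F2_eq d s x₁ x₂ hx₁, hpow] at h2
    set z := x₂ / x₁ with hzdef
    set Q := (qP d s).eval z with hQdef
    set P := (pP d s).eval z with hPdef
    have key : x₁ ^ (d - 2) * Q = 1 := by
      apply mul_right_cancel₀ hx₁
      linear_combination h1
    have hQne : Q ≠ 0 := by
      intro h0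
      rw [h0, mul_zero] at key
      exact zero_ne_one key
    have hxp : x₁ ^ (d - 2) ≠ 0 := pow_ne_zero _ hx₁
    refine ⟨?_, hQne, by rw [eq_div_iff hQne]; exact key⟩
    have hz' : z * x₁ = x₂ := div_mul_cancel₀ x₂ hx₁
    have hmul : x₁ ^ (d - 2) * x₁ * (z * Q - P) = 0 := by
      linear_combination (z * x₁) * key - h2 + hz'
    rcases mul_eq_zero.mp hmul with h | h
    · exact absurd h (mul_ne_zero hxp hx₁)
    · exact h
  · -- Part 2 : converse for x₁ ≠ 0
    intro z hz hQ
    set Q := (qP d s).eval z with hQdef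
    set P := (pP d s).eval z with hPdef
    constructor
    · intro x₁
      constructor
      · rintro ⟨hx₁, h1, _⟩
        rw [F1_eq d s x₁ (x₁ * z) hx₁, mul_div_cancel_left₀ z hx₁, hpow] at h1
        rw [eq_div_iff hQ]
        apply mul_right_cancel₀ hx₁
        linear_combination h1
      · intro hpw
        have hx₁ : x₁ ≠ 0 := by
          intro h0
          rw [h0, zero_pow hd2.ne'] at hpw
          exact one_div_ne_zero hQ hpw.symm
        have key : x₁ ^ (d - 2) * Q = 1 := by
          rw [hpw]; field_simp
        refine ⟨hx₁, ?_, ?_⟩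
        · rw [F1_eq d s x₁ (x₁ * z) hx₁, mul_div_cancel_left₀ z hx₁, hpow]
          linear_combination x₁ * key
        · rw [F2_eq d s x₁ (x₁ * z) hx₁, mul_div_cancel_left₀ z hx₁, hpow]
          linear_combination (x₁ * z) * key - (x₁ ^ (d - 2) * x₁) * hz
    · exact ncard_pow_eq hd2 (one_div_ne_zero hQ)
  · -- Part 3 : x₁ = 0 fixed points force s_{d-1} = 0, s_d ≠ 0
    intro x₂ hx₂ h1 h2
    rw [F1_zero d hd1 s x₂] at h1
    rw [F2_zero d hd1 s x₂] at h2
    have hxp : x₂ ^ (d - 1) ≠ 0 := pow_ne_zero _ hx₂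
    constructor
    · rcases mul_eq_zero.mp h1 with h | h
      · exact h
      · exact absurd h hxp
    · intro h0
      rw [h0, zero_mul] at h2
      exact hx₂ h2.symm
  · -- Part 4 : converse for x₁ = 0
    intro hs1 hsd
    constructor
    · intro x₂
      constructor
      · rintro ⟨hx₂, _, h2⟩
        rw [F2_zero d hd1 s x₂, hpow] at h2
        rw [eq_div_iff hsd]
        apply mul_right_cancel₀ hx₂
        linear_combination h2
      · intro hpw
        have hx₂ : x₂ ≠ 0 := by
          intro h0
          rw [h0, zero_pow hd2.ne'] at hpw
          exact one_div_ne_zero hsd hpw.symm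
        refine ⟨hx₂, ?_, ?_⟩
        · rw [F1_zero d hd1 s x₂, hs1, zero_mul]
        · rw [F2_zero d hd1 s x₂, hpow, hpw]
          field_simp
    · exact ncard_pow_eq hd2 (one_div_ne_zero hsd)

end
end

section
/- Assume s ≠ (0,…,0,s_d), i.e., q is not the zero polynomial. Then the polynomial z·v(z) − u(z) has degree at most (d−1)² + 1. Moreover, if x = (x₁,x₂) with x₁ ≠ 0 satisfies F(x) = conj(x) ≠ 0, then z = x₂/x₁ satisfies z·v(z) − u(z) = 0 and v(z) ≠ 0. -/
/-! Put `z = x₂ / x₁` and `w = x₁ ^ (d - 1)`. Dehomogenising gives `w q(z) = F₁(x)` and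
`w p(z) = F₂(x)`, while `v` and `u` are the components of `F` with conjugated coefficients,
evaluated at `(q, p)`. At an anti-fixed point `F x = conj x` this yields
`w ^ (d - 1) (v(z), u(z)) = conj (F x) = (x₁, x₂)`, so `w ^ (d - 1) (z v(z) - u(z)) = z x₁ - x₂ = 0`
and `v(z) ≠ 0`. The degree bound holds because `u, v` are forms of degree `d - 1` in `p, q`,
which have degree at most `d - 1`. -/

noncomputable section

/-- `u(z) = Σ_{j=0}^{d-1} C(d-1,j) conj(s_{j+1}) p(z)^j q(z)^{d-1-j}`. -/
def uP (d : ℕ) (s : ℕ → ℂ) : Polynomial ℂ :=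
  ∑ j ∈ Finset.range d, Polynomial.C (((d - 1).choose j : ℂ) * (starRingEnd ℂ) (s (j + 1))) *
    (pP d s) ^ j * (qP d s) ^ (d - 1 - j)

/-- `v(z) = Σ_{j=0}^{d-1} C(d-1,j) conj(s_j) p(z)^j q(z)^{d-1-j}`. -/
def vP (d : ℕ) (s : ℕ → ℂ) : Polynomial ℂ :=
  ∑ j ∈ Finset.range d, Polynomial.C (((d - 1).choose j : ℂ) * (starRingEnd ℂ) (s j)) *
    (pP d s) ^ j * (qP d s) ^ (d - 1 - j)

open Polynomial ComplexConjugate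

section Dehomogenize

theorem pow_mul_eval_div_sum_C_mul_X_pow {K : Type*} [Field K] {n : ℕ} {S : Finset ℕ}
    (hS : ∀ j ∈ S, j ≤ n) (c : ℕ → K) {x : K} (hx : x ≠ 0) (y : K) :
    x ^ n * (∑ j ∈ S, C (c j) * X ^ j).eval (y / x) = ∑ j ∈ S, c j * x ^ (n - j) * y ^ j := by
  simp only [eval_finsetSum, eval_mul, eval_C, eval_pow, eval_X, Finset.mul_sum]
  refine Finset.sum_congr rfl fun j hj => ?_
  rw [← Nat.sub_add_cancel (hS j hj), pow_add, div_pow, Nat.add_sub_cancel]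
  field_simp

theorem pow_mul_eval_sum_C_mul_pow_mul_pow {R : Type*} [CommRing R] {n : ℕ} {S : Finset ℕ}
    (hS : ∀ j ∈ S, j ≤ n) (c : ℕ → R) (P Q : R[X]) (y z : R) :
    y ^ n * (∑ j ∈ S, C (c j) * P ^ j * Q ^ (n - j)).eval z =
      ∑ j ∈ S, c j * (y * Q.eval z) ^ (n - j) * (y * P.eval z) ^ j := by
  simp only [eval_finsetSum, eval_mul, eval_C, eval_pow, Finset.mul_sum]
  refine Finset.sum_congr rfl fun j hj => ?_
  rw [← Nat.sub_add_cancel (hS j hj), pow_add, Nat.add_sub_cancel]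
  ring

theorem natDegree_sum_C_mul_X_pow_le {R : Type*} [Semiring R] {n : ℕ} {S : Finset ℕ}
    (hS : ∀ j ∈ S, j ≤ n) (c : ℕ → R) : (∑ j ∈ S, C (c j) * X ^ j).natDegree ≤ n :=
  natDegree_sum_le_of_forall_le _ _ fun j hj => (natDegree_C_mul_X_pow_le _ _).trans (hS j hj)

theorem natDegree_sum_C_mul_pow_mul_pow_le {R : Type*} [CommSemiring R] {n m : ℕ} {S : Finset ℕ}
    (hS : ∀ j ∈ S, j ≤ n) (c : ℕ → R) {P Q : R[X]} (hP : P.natDegree ≤ m)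
    (hQ : Q.natDegree ≤ m) : (∑ j ∈ S, C (c j) * P ^ j * Q ^ (n - j)).natDegree ≤ n * m := by
  refine natDegree_sum_le_of_forall_le _ _ fun j hj => ?_
  calc (C (c j) * P ^ j * Q ^ (n - j)).natDegree
      ≤ j * m + (n - j) * m := by
        refine natDegree_mul_le.trans (add_le_add ?_ ?_)
        · exact (natDegree_C_mul_le _ _).trans (natDegree_pow_le_of_le j hP)
        · exact natDegree_pow_le_of_le _ hQ
    _ = n * m := by rw [← add_mul, Nat.add_sub_cancel' (hS j hj)]

theorem le_pred_of_mem_range {d j : ℕ} (hj : j ∈ Finset.range d) : j ≤ d - 1 :=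
  Nat.le_sub_one_of_lt (Finset.mem_range.mp hj)

end Dehomogenize

section AntiFixedPoints

variable (d : ℕ) (s : ℕ → ℂ)

theorem natDegree_pP_le : (pP d s).natDegree ≤ d - 1 :=
  natDegree_sum_C_mul_X_pow_le (fun _ => le_pred_of_mem_range) _

theorem natDegree_qP_le : (qP d s).natDegree ≤ d - 1 :=
  natDegree_sum_C_mul_X_pow_le (fun _ => le_pred_of_mem_range) _

theorem natDegree_uP_le : (uP d s).natDegree ≤ (d - 1) ^ 2 :=
  (sq (d - 1)).symm ▸ natDegree_sum_C_mul_pow_mul_pow_le (fun _ => le_pred_of_mem_range) _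
    (natDegree_pP_le d s) (natDegree_qP_le d s)

theorem natDegree_vP_le : (vP d s).natDegree ≤ (d - 1) ^ 2 :=
  (sq (d - 1)).symm ▸ natDegree_sum_C_mul_pow_mul_pow_le (fun _ => le_pred_of_mem_range) _
    (natDegree_pP_le d s) (natDegree_qP_le d s)

theorem natDegree_X_mul_vP_sub_uP_le :
    (X * vP d s - uP d s).natDegree ≤ (d - 1) ^ 2 + 1 := by
  have hv := natDegree_vP_le d s
  have hu := natDegree_uP_le d s
  refine (natDegree_sub_le _ _).trans (max_le (natDegree_mul_le.trans ?_) (by omega))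
  rw [natDegree_X]
  omega

variable {x₁ : ℂ} (x₂ : ℂ)

theorem pow_mul_eval_qP (hx₁ : x₁ ≠ 0) : x₁ ^ (d - 1) * (qP d s).eval (x₂ / x₁) = F1 d s x₁ x₂ :=
  pow_mul_eval_div_sum_C_mul_X_pow (fun _ => le_pred_of_mem_range) _ hx₁ x₂

theorem pow_mul_eval_pP (hx₁ : x₁ ≠ 0) : x₁ ^ (d - 1) * (pP d s).eval (x₂ / x₁) = F2 d s x₁ x₂ :=
  pow_mul_eval_div_sum_C_mul_X_pow (fun _ => le_pred_of_mem_range) _ hx₁ x₂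

theorem pow_mul_eval_vP (y z : ℂ) :
    y ^ (d - 1) * (vP d s).eval z =
      F1 d (fun j => conj (s j)) (y * (qP d s).eval z) (y * (pP d s).eval z) :=
  pow_mul_eval_sum_C_mul_pow_mul_pow (fun _ => le_pred_of_mem_range) _ _ _ y z

theorem pow_mul_eval_uP (y z : ℂ) :
    y ^ (d - 1) * (uP d s).eval z =
      F2 d (fun j => conj (s j)) (y * (qP d s).eval z) (y * (pP d s).eval z) :=
  pow_mul_eval_sum_C_mul_pow_mul_pow (fun _ => le_pred_of_mem_range) _ _ _ y z

theorem F1_conj (a b : ℂ) : F1 d (fun j => conj (s j)) (conj a) (conj b) = conj (F1 d s a b) := by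
  simp only [F1, map_sum, map_mul, map_pow, map_natCast]

theorem F2_conj (a b : ℂ) : F2 d (fun j => conj (s j)) (conj a) (conj b) = conj (F2 d s a b) := by
  simp only [F2, map_sum, map_mul, map_pow, map_natCast]

variable {d s x₂}

theorem eval_vP_eval_uP_of_antifixed (hx₁ : x₁ ≠ 0) (h₁ : F1 d s x₁ x₂ = conj x₁)
    (h₂ : F2 d s x₁ x₂ = conj x₂) :
    (x₁ ^ (d - 1)) ^ (d - 1) * (vP d s).eval (x₂ / x₁) = x₁ ∧
      (x₁ ^ (d - 1)) ^ (d - 1) * (uP d s).eval (x₂ / x₁) = x₂ := by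
  rw [pow_mul_eval_vP, pow_mul_eval_uP, pow_mul_eval_qP d s x₂ hx₁, pow_mul_eval_pP d s x₂ hx₁,
    h₁, h₂, F1_conj, F2_conj, h₁, h₂, Complex.conj_conj, Complex.conj_conj]
  exact ⟨rfl, rfl⟩

end AntiFixedPoints

theorem stmt12_general (d : ℕ) (s : ℕ → ℂ) :
    (Polynomial.X * vP d s - uP d s).natDegree ≤ (d - 1) ^ 2 + 1 ∧
    ∀ x₁ x₂ : ℂ, x₁ ≠ 0 →
      F1 d s x₁ x₂ = (starRingEnd ℂ) x₁ → F2 d s x₁ x₂ = (starRingEnd ℂ) x₂ →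
      (Polynomial.X * vP d s - uP d s).eval (x₂ / x₁) = 0 ∧
      (vP d s).eval (x₂ / x₁) ≠ 0 := by
  refine ⟨natDegree_X_mul_vP_sub_uP_le d s, fun x₁ x₂ hx₁ h₁ h₂ => ?_⟩
  obtain ⟨hv, hu⟩ := eval_vP_eval_uP_of_antifixed hx₁ h₁ h₂
  have hw : (x₁ ^ (d - 1)) ^ (d - 1) ≠ 0 := pow_ne_zero _ (pow_ne_zero _ hx₁)
  refine ⟨(mul_eq_zero.mp ?_).resolve_left hw, fun h => hx₁ (by rw [← hv, h, mul_zero])⟩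
  calc (x₁ ^ (d - 1)) ^ (d - 1) * (X * vP d s - uP d s).eval (x₂ / x₁)
      = x₂ / x₁ * ((x₁ ^ (d - 1)) ^ (d - 1) * (vP d s).eval (x₂ / x₁))
        - (x₁ ^ (d - 1)) ^ (d - 1) * (uP d s).eval (x₂ / x₁) := by
        rw [eval_sub, eval_mul, eval_X]; ring
    _ = 0 := by rw [hv, hu, div_mul_cancel₀ _ hx₁, sub_self]

/-- If `q ≠ 0`, the polynomial `z v(z) - u(z)` has degree at most `(d-1)² + 1` and every
nonzero anti-fixed point of `F` with `x₁ ≠ 0` yields a root `z = x₂/x₁` of it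
with `v(z) ≠ 0`. -/
theorem stmt12 (d : ℕ) (hd : 3 ≤ d) (s : ℕ → ℂ) (hq : qP d s ≠ 0) :
    (Polynomial.X * vP d s - uP d s).natDegree ≤ (d - 1) ^ 2 + 1 ∧
    ∀ x₁ x₂ : ℂ, x₁ ≠ 0 →
      F1 d s x₁ x₂ = (starRingEnd ℂ) x₁ → F2 d s x₁ x₂ = (starRingEnd ℂ) x₂ →
      (Polynomial.X * vP d s - uP d s).eval (x₂ / x₁) = 0 ∧
      (vP d s).eval (x₂ / x₁) ≠ 0 :=
  stmt12_general d s

end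
end

section
/- Assume the polynomial z·v(z) − u(z) is not the zero polynomial, and let R₁ = {z ∈ ℂ : z·v(z) − u(z) = 0} (a finite set). Then the complex spectral norm of f satisfies ‖f‖_{σ,ℂ} = max{ |s_d| , max{ |φ(z)| / (1+|z|²)^{d/2} : z ∈ R₁ } }. -/
noncomputable section

/-- `φ(z) = Σ_{j=0}^{d} C(d,j) s_j z^j`. -/
def phiP (d : ℕ) (s : ℕ → ℂ) : Polynomial ℂ :=
  ∑ j ∈ Finset.range (d + 1), Polynomial.C ((d.choose j : ℂ) * s j) * Polynomial.X ^ j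

/-- `f(x₁,x₂) = Σ_{j=0}^{d} C(d,j) s_j x₁^{d-j} x₂^j`. -/
def fval (d : ℕ) (s : ℕ → ℂ) (x₁ x₂ : ℂ) : ℂ :=
  ∑ j ∈ Finset.range (d + 1), (d.choose j : ℂ) * s j * x₁ ^ (d - j) * x₂ ^ j

/-- The complex spectral norm of the binary form `f`. -/
def specNorm2 (d : ℕ) (s : ℕ → ℂ) : ℝ :=
  sSup {r : ℝ | ∃ x₁ x₂ : ℂ, ‖x₁‖ ^ 2 + ‖x₂‖ ^ 2 = 1 ∧
    r = ‖fval d s x₁ x₂‖}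

/-! The maximum of `|f|` on the unit sphere is attained. At a maximiser with `x₁ = 0` its value is
`|s_d|`. Otherwise `z = x₂ / x₁` maximises `|φ(z)| / (1 + |z|²)^(d/2)`, and if `φ(z) ≠ 0` the
first-order condition there reads `conj φ(z) · φ'(z) · (1 + |z|²) = d |φ(z)|² conj z`. Since
`φ' = d p` and `φ = z p + q`, this says `p(z) = conj z · q(z)`, and substituting into `u` and `v`
gives `u(z) = q(z)^(d-1) conj p(z) = z q(z)^(d-1) conj q(z) = z v(z)`. -/

open Polynomial Finset ComplexConjugate

theorem Complex.eq_of_forall_re_mul_eq {a b : ℂ} (h : ∀ w : ℂ, (a * w).re = (b * w).re) :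
    a = b := by
  have h1 := h 1
  have hI := h Complex.I
  simp only [mul_one, Complex.mul_I_re, neg_inj] at h1 hI
  exact Complex.ext h1 hI

lemma sum_mul_mul_pow_mul_pow_sub {R : Type*} [CommSemiring R] (c : ℕ → R) (d : ℕ) (w a : R) :
    ∑ j ∈ range d, c j * (w * a) ^ j * a ^ (d - 1 - j) =
      a ^ (d - 1) * ∑ j ∈ range d, c j * w ^ j := by
  rw [mul_sum]
  refine sum_congr rfl fun j hj => ?_
  rw [mul_pow, ← pow_mul_pow_sub a (Nat.le_sub_one_of_lt (mem_range.1 hj))]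
  ring

theorem HasDerivAt.conj_mul_eq_of_forall_sq_le {F : ℂ → ℂ} {D z₀ : ℂ} (hF : HasDerivAt F D z₀)
    (n : ℕ) (M : ℝ) (hle : ∀ z, ‖F z‖ ^ 2 ≤ M * (1 + ‖z‖ ^ 2) ^ n)
    (heq : ‖F z₀‖ ^ 2 = M * (1 + ‖z₀‖ ^ 2) ^ n) :
    conj (F z₀) * D = ((M * n * (1 + ‖z₀‖ ^ 2) ^ (n - 1) : ℝ) : ℂ) * conj z₀ := by
  refine Complex.eq_of_forall_re_mul_eq fun w => ?_
  have hγ : HasDerivAt (fun t : ℝ => z₀ + t * w) w 0 := by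
    simpa using ((hasDerivAt_id (0 : ℝ)).ofReal_comp.mul_const w).const_add z₀
  have hFγ : HasDerivAt (fun t : ℝ => F (z₀ + t * w)) (D * w) 0 :=
    HasDerivAt.comp (0 : ℝ) (by simpa using hF) hγ
  have hmax : IsLocalMax
      (fun t : ℝ => ‖F (z₀ + t * w)‖ ^ 2 - M * (1 + ‖z₀ + t * w‖ ^ 2) ^ n) 0 :=
    Filter.Eventually.of_forall fun t => by simp [heq, hle (z₀ + t * w)]
  have hcrit := hmax.hasDerivAt_eq_zero
    (hFγ.norm_sq.sub (((hγ.norm_sq.const_add 1).pow n).const_mul M))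
  simp only [Complex.ofReal_zero, zero_mul, add_zero, Complex.inner, Complex.mul_re,
    Complex.mul_im, Complex.ofReal_re, Complex.ofReal_im, Complex.conj_re,
    Complex.conj_im] at hcrit ⊢
  linear_combination hcrit / 2

theorem HasDerivAt.conj_mul_mul_eq_of_forall_le {F : ℂ → ℂ} {D z₀ : ℂ} (hF : HasDerivAt F D z₀)
    (n : ℕ) (hmax : ∀ z, ‖F z‖ / (1 + ‖z‖ ^ 2) ^ ((n : ℝ) / 2) ≤
      ‖F z₀‖ / (1 + ‖z₀‖ ^ 2) ^ ((n : ℝ) / 2)) :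
    conj (F z₀) * D * (1 + z₀ * conj z₀) = n * F z₀ * conj (F z₀) * conj z₀ := by
  set M := (‖F z₀‖ / (1 + ‖z₀‖ ^ 2) ^ ((n : ℝ) / 2)) ^ 2
  have hsq : ∀ z : ℂ, ((1 + ‖z‖ ^ 2) ^ ((n : ℝ) / 2)) ^ 2 = (1 + ‖z‖ ^ 2) ^ n := fun z => by
    rw [← Real.rpow_mul_natCast (by positivity)]
    norm_num
  have hle : ∀ z, ‖F z‖ ^ 2 ≤ M * (1 + ‖z‖ ^ 2) ^ n := fun z => by
    have hz := hmax z
    rw [div_le_iff₀ (by positivity)] at hz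
    rw [← hsq, ← mul_pow]
    exact pow_le_pow_left₀ (norm_nonneg _) hz 2
  have heq : ‖F z₀‖ ^ 2 = M * (1 + ‖z₀‖ ^ 2) ^ n := by
    rw [← hsq, ← mul_pow, div_mul_cancel₀ _ (by positivity)]
  have key := hF.conj_mul_eq_of_forall_sq_le n M hle heq
  rw [Complex.mul_conj', key, mul_assoc (n : ℂ), Complex.mul_conj',
    ← Complex.ofReal_pow ‖F z₀‖, heq]
  cases n with
  | zero => simp
  | succ n => push_cast; ring

@[simp]
lemma eval_pP (d : ℕ) (s : ℕ → ℂ) (z : ℂ) :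
    (pP d s).eval z = ∑ j ∈ range d, ((d - 1).choose j : ℂ) * s (j + 1) * z ^ j := by
  simp [pP, eval_finsetSum]

@[simp]
lemma eval_qP (d : ℕ) (s : ℕ → ℂ) (z : ℂ) :
    (qP d s).eval z = ∑ j ∈ range d, ((d - 1).choose j : ℂ) * s j * z ^ j := by
  simp [qP, eval_finsetSum]

@[simp]
lemma eval_phiP (d : ℕ) (s : ℕ → ℂ) (z : ℂ) :
    (phiP d s).eval z = ∑ j ∈ range (d + 1), (d.choose j : ℂ) * s j * z ^ j := by
  simp [phiP, eval_finsetSum]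

lemma eval_phiP_eq_X_mul_pP_add_qP {d : ℕ} (hd : 1 ≤ d) (s : ℕ → ℂ) (z : ℂ) :
    (phiP d s).eval z = z * (pP d s).eval z + (qP d s).eval z := by
  obtain ⟨n, rfl⟩ := Nat.exists_eq_add_of_le' hd
  have hq : ∑ j ∈ range (n + 1), (n.choose j : ℂ) * s j * z ^ j
      = ∑ j ∈ range (n + 1), (n.choose (j + 1) : ℂ) * s (j + 1) * z ^ (j + 1) + s 0 := by
    rw [sum_range_succ (fun j => (n.choose (j + 1) : ℂ) * s (j + 1) * z ^ (j + 1)) n,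
      Nat.choose_succ_self, sum_range_succ']
    simp
  simp only [eval_phiP, eval_pP, eval_qP, Nat.add_sub_cancel, hq, mul_sum]
  rw [sum_range_succ', ← add_assoc, ← sum_add_distrib]
  simp only [Nat.choose_succ_succ', Nat.choose_zero_right]
  push_cast
  congr 1
  · exact sum_congr rfl fun j _ => by ring
  · simp

lemma eval_derivative_phiP (d : ℕ) (s : ℕ → ℂ) (z : ℂ) :
    (derivative (phiP d s)).eval z = d * (pP d s).eval z := by
  cases d with
  | zero => simp [phiP, pP]
  | succ n =>
    simp only [phiP, map_sum, derivative_C_mul_X_pow, eval_finsetSum, eval_C, eval_mul, eval_pow,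
      eval_X, eval_pP, Nat.add_sub_cancel, mul_sum]
    rw [sum_range_succ']
    simp only [Nat.cast_zero, mul_zero, zero_mul, add_zero, Nat.add_sub_cancel]
    refine sum_congr rfl fun j _ => ?_
    have hchoose := congrArg (Nat.cast : ℕ → ℂ) (Nat.add_one_mul_choose_eq n j)
    push_cast at hchoose ⊢
    linear_combination (s (j + 1) * z ^ j) * hchoose.symm

lemma eval_X_mul_vP_sub_uP_eq_zero (d : ℕ) (s : ℕ → ℂ) {z : ℂ}
    (hz : (pP d s).eval z = conj z * (qP d s).eval z) :
    (X * vP d s - uP d s).eval z = 0 := by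
  have hu : (uP d s).eval z = (qP d s).eval z ^ (d - 1) * conj ((pP d s).eval z) := by
    conv_lhs => rw [uP, eval_finsetSum]; simp only [eval_mul, eval_C, eval_pow, hz]
    rw [sum_mul_mul_pow_mul_pow_sub]
    simp [map_sum]
  have hv : (vP d s).eval z = (qP d s).eval z ^ (d - 1) * conj ((qP d s).eval z) := by
    conv_lhs => rw [vP, eval_finsetSum]; simp only [eval_mul, eval_C, eval_pow, hz]
    rw [sum_mul_mul_pow_mul_pow_sub]
    simp [map_sum]
  rw [eval_sub, eval_mul, eval_X, hu, hv, hz, map_mul, Complex.conj_conj]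
  ring

lemma fval_zero_left (d : ℕ) (s : ℕ → ℂ) (b : ℂ) : fval d s 0 b = s d * b ^ d := by
  rw [fval, sum_range_succ, sum_eq_zero fun j hj => ?_]
  · simp
  · rw [zero_pow (Nat.sub_ne_zero_of_lt (mem_range.1 hj)), mul_zero, zero_mul]

lemma fval_mul_right (d : ℕ) (s : ℕ → ℂ) (a z : ℂ) :
    fval d s a (a * z) = a ^ d * (phiP d s).eval z := by
  rw [fval, eval_phiP, mul_sum]
  refine sum_congr rfl fun j hj => ?_
  rw [mul_pow, ← pow_mul_pow_sub a (Nat.le_of_lt_succ (mem_range.1 hj))]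
  ring

lemma norm_fval_mul_right (d : ℕ) (s : ℕ → ℂ) {a z : ℂ} (ha : ‖a‖ ^ 2 * (1 + ‖z‖ ^ 2) = 1) :
    ‖fval d s a (a * z)‖ = ‖(phiP d s).eval z‖ / (1 + ‖z‖ ^ 2) ^ ((d : ℝ) / 2) := by
  have hsqrt : ‖a‖ * √(1 + ‖z‖ ^ 2) = 1 := by
    rw [← Real.sqrt_sq (norm_nonneg a), ← Real.sqrt_mul (sq_nonneg _), ha, Real.sqrt_one]
  rw [fval_mul_right, norm_mul, norm_pow, eq_inv_of_mul_eq_one_left hsqrt,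
    Real.rpow_div_two_eq_sqrt _ (by positivity), Real.rpow_natCast, inv_pow, inv_mul_eq_div]

lemma isGreatest_specNorm2 (d : ℕ) (s : ℕ → ℂ) :
    IsGreatest {r : ℝ | ∃ x₁ x₂ : ℂ, ‖x₁‖ ^ 2 + ‖x₂‖ ^ 2 = 1 ∧ r = ‖fval d s x₁ x₂‖}
      (specNorm2 d s) := by
  set K : Set (ℂ × ℂ) := {x | ‖x.1‖ ^ 2 + ‖x.2‖ ^ 2 = 1}
  have hK : IsCompact K := by
    refine Metric.isCompact_of_isClosed_isBounded (isClosed_eq (by fun_prop) (by fun_prop)) ?_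
    refine (isBounded_iff_forall_norm_le).2 ⟨1, fun x (hx : _ = _) => ?_⟩
    rw [Prod.norm_def, max_le_iff, ← sq_le_one_iff₀ (norm_nonneg _),
      ← sq_le_one_iff₀ (norm_nonneg _)]
    constructor <;> nlinarith [sq_nonneg ‖x.1‖, sq_nonneg ‖x.2‖]
  have himage : {r : ℝ | ∃ x₁ x₂ : ℂ, ‖x₁‖ ^ 2 + ‖x₂‖ ^ 2 = 1 ∧ r = ‖fval d s x₁ x₂‖} =
      (fun x : ℂ × ℂ => ‖fval d s x.1 x.2‖) '' K := by
    ext r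
    simp [K, eq_comm]
  have hcont : Continuous fun x : ℂ × ℂ => ‖fval d s x.1 x.2‖ := by
    unfold fval
    fun_prop
  rw [specNorm2, himage]
  exact (hK.image hcont).isGreatest_sSup ⟨_, (0, 1), by simp [K], rfl⟩

lemma norm_le_specNorm2 (d : ℕ) (s : ℕ → ℂ) : ‖s d‖ ≤ specNorm2 d s :=
  (isGreatest_specNorm2 d s).2 ⟨0, 1, by simp, by simp [fval_zero_left]⟩

lemma div_rpow_le_specNorm2 (d : ℕ) (s : ℕ → ℂ) (z : ℂ) :
    ‖(phiP d s).eval z‖ / (1 + ‖z‖ ^ 2) ^ ((d : ℝ) / 2) ≤ specNorm2 d s := by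
  set a : ℂ := (((√(1 + ‖z‖ ^ 2))⁻¹ : ℝ) : ℂ)
  have ha : ‖a‖ ^ 2 * (1 + ‖z‖ ^ 2) = 1 := by
    rw [Complex.norm_real, Real.norm_eq_abs, sq_abs, inv_pow, Real.sq_sqrt (by positivity),
      inv_mul_cancel₀ (by positivity)]
  refine (isGreatest_specNorm2 d s).2 ⟨a, a * z, ?_, (norm_fval_mul_right d s ha).symm⟩
  rw [norm_mul, mul_pow, ← ha]
  ring

lemma eval_pP_eq_conj_mul_eval_qP_of_forall_le {d : ℕ} (hd : 1 ≤ d) (s : ℕ → ℂ) {z₀ : ℂ}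
    (hφ : (phiP d s).eval z₀ ≠ 0)
    (hmax : ∀ z, ‖(phiP d s).eval z‖ / (1 + ‖z‖ ^ 2) ^ ((d : ℝ) / 2) ≤
      ‖(phiP d s).eval z₀‖ / (1 + ‖z₀‖ ^ 2) ^ ((d : ℝ) / 2)) :
    (pP d s).eval z₀ = conj z₀ * (qP d s).eval z₀ := by
  have key := ((phiP d s).hasDerivAt z₀).conj_mul_mul_eq_of_forall_le d hmax
  rw [eval_derivative_phiP] at key
  have hdecomp := eval_phiP_eq_X_mul_pP_add_qP hd s z₀
  have hne : (d : ℂ) * conj ((phiP d s).eval z₀) ≠ 0 :=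
    mul_ne_zero (by exact_mod_cast (by omega : d ≠ 0)) ((_root_.map_ne_zero _).2 hφ)
  refine mul_left_cancel₀ hne ?_
  linear_combination key + (d * conj ((phiP d s).eval z₀) * conj z₀) * hdecomp

lemma specNorm2_mem {d : ℕ} (hd : 1 ≤ d) (s : ℕ → ℂ) :
    specNorm2 d s ∈ ({‖s d‖} : Set ℝ) ∪
      {r : ℝ | ∃ z : ℂ, (X * vP d s - uP d s).eval z = 0 ∧
        r = ‖(phiP d s).eval z‖ / (1 + ‖z‖ ^ 2) ^ ((d : ℝ) / 2)} := by
  obtain ⟨⟨x₁, x₂, hx, hval⟩, -⟩ := isGreatest_specNorm2 d s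
  rcases eq_or_ne x₁ 0 with rfl | hx₁
  · have hx₂ : ‖x₂‖ = 1 :=
      (pow_eq_one_iff_of_nonneg (norm_nonneg _) two_ne_zero).1 (by simpa using hx)
    left
    simp [hval, fval_zero_left, hx₂]
  set z := x₂ / x₁
  have hx₂ : x₂ = x₁ * z := (mul_div_cancel₀ x₂ hx₁).symm
  have ha : ‖x₁‖ ^ 2 * (1 + ‖z‖ ^ 2) = 1 := by
    rw [hx₂, norm_mul, mul_pow] at hx
    linear_combination hx
  have hz : specNorm2 d s = ‖(phiP d s).eval z‖ / (1 + ‖z‖ ^ 2) ^ ((d : ℝ) / 2) := by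
    rw [hval, hx₂, norm_fval_mul_right d s ha]
  by_cases hφ : (phiP d s).eval z = 0
  · left
    have hzero : specNorm2 d s = 0 := by simp [hz, hφ]
    rw [Set.mem_singleton_iff, hzero]
    exact le_antisymm (norm_nonneg _) (hzero ▸ norm_le_specNorm2 d s)
  · right
    have hmax := fun w => hz ▸ div_rpow_le_specNorm2 d s w
    exact ⟨z, eval_X_mul_vP_sub_uP_eq_zero d s
      (eval_pP_eq_conj_mul_eval_qP_of_forall_le hd s hφ hmax), hz⟩

/-- If `z v(z) - u(z)` is not the zero polynomial, then its root set `R₁` is finite and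
`‖f‖_{σ,ℂ} = max { |s_d|, max_{z ∈ R₁} |φ(z)|/(1+|z|²)^{d/2} }`. -/
theorem stmt13 (d : ℕ) (hd : 3 ≤ d) (s : ℕ → ℂ)
    (h : Polynomial.X * vP d s - uP d s ≠ 0) :
    {z : ℂ | (Polynomial.X * vP d s - uP d s).eval z = 0}.Finite ∧
    IsGreatest (({‖s d‖} : Set ℝ) ∪
        {r : ℝ | ∃ z : ℂ, (Polynomial.X * vP d s - uP d s).eval z = 0 ∧
          r = ‖(phiP d s).eval z‖ / (1 + ‖z‖ ^ 2) ^ ((d : ℝ) / 2)})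
      (specNorm2 d s) := by
  refine ⟨finite_setOfPred_isRoot h, specNorm2_mem (by omega) s, ?_⟩
  rintro r (rfl | ⟨z, -, rfl⟩)
  · exact norm_le_specNorm2 d s
  · exact div_rpow_le_specNorm2 d s z

end
end

section
/- Let d, n ≥ 2 and let f(x) = a·x^j + b·x^k be a homogeneous polynomial of degree d in n complex variables, where j ≠ k are multi-indices with |j| = |k| = d, a, b ∈ ℂ, and x^j = x₁^{j₁}⋯x_n^{j_n}. Set g(x) = |a|·x^j + |b|·x^k. Then ‖f‖_{σ,ℂ} = ‖g‖_{σ,ℂ} = ‖g‖_{σ,ℝ}, and there exists y ∈ ℝ^n with y ≥ 0 (componentwise), ‖y‖₂ = 1, and g(y) = ‖g‖_{σ,ℂ}. -/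
/-- The complex spectral norm of a function `f : ℂⁿ → ℂ`. -/
noncomputable def specC {n : ℕ} (f : (Fin n → ℂ) → ℂ) : ℝ :=
  sSup {r : ℝ | ∃ x : Fin n → ℂ, euclNorm x = 1 ∧ r = ‖f x‖}

/-- The real spectral norm of a function `f : ℝⁿ → ℝ`. -/
noncomputable def specR {n : ℕ} (f : (Fin n → ℝ) → ℝ) : ℝ :=
  sSup {r : ℝ | ∃ x : Fin n → ℝ, euclNormR x = 1 ∧ r = |f x|}

open Finset Complex

section Binomial

variable {n : ℕ} (j k : Fin n → ℕ)

def binomial {R : Type*} [CommSemiring R] (c₁ c₂ : R) (x : Fin n → R) : R :=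
  c₁ * ∏ i, x i ^ j i + c₂ * ∏ i, x i ^ k i

theorem binomial_nonneg {A B : ℝ} (hA : 0 ≤ A) (hB : 0 ≤ B) {y : Fin n → ℝ}
    (hy : ∀ i, 0 ≤ y i) :
    0 ≤ binomial j k A B y :=
  add_nonneg (mul_nonneg hA (prod_nonneg fun i _ => pow_nonneg (hy i) _))
    (mul_nonneg hB (prod_nonneg fun i _ => pow_nonneg (hy i) _))

theorem continuous_binomial (A B : ℝ) : Continuous (binomial j k A B) := by
  unfold binomial; fun_prop

theorem norm_binomial_le {𝕜 : Type*} [NormedField 𝕜] (c₁ c₂ : 𝕜) (x : Fin n → 𝕜) :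
    ‖binomial j k c₁ c₂ x‖ ≤ binomial j k (R := ℝ) ‖c₁‖ ‖c₂‖ (fun i => ‖x i‖) := by
  simpa only [binomial, norm_mul, norm_prod, norm_pow] using
    norm_add_le (c₁ * ∏ i, x i ^ j i) (c₂ * ∏ i, x i ^ k i)

theorem binomial_mul_mulSingle {R : Type*} [CommSemiring R] (c₁ c₂ : R) (x : Fin n → R)
    (i₀ : Fin n) (c : R) :
    binomial j k c₁ c₂ (fun i => x i * (Pi.mulSingle i₀ c : Fin n → R) i) =
      binomial j k (c₁ * c ^ j i₀) (c₂ * c ^ k i₀) x := by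
  have key : ∀ e : Fin n → ℕ,
      ∏ i, (x i * (Pi.mulSingle i₀ c : Fin n → R) i) ^ e i = c ^ e i₀ * ∏ i, x i ^ e i := by
    intro e
    rw [prod_congr rfl fun i _ => mul_pow _ _ _, prod_mul_distrib, mul_comm,
      Fintype.prod_eq_single i₀ fun i hi => by rw [Pi.mulSingle_eq_of_ne hi, one_pow],
      Pi.mulSingle_eq_same]
  simp only [binomial, key, mul_assoc]

theorem norm_binomial_ofReal_of_sameRay {c₁ c₂ : ℂ} (h : SameRay ℝ c₁ c₂) {y : Fin n → ℝ}
    (hy : ∀ i, 0 ≤ y i) :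
    ‖binomial j k c₁ c₂ (fun i => (y i : ℂ))‖ = binomial j k ‖c₁‖ ‖c₂‖ y := by
  have hprod : ∀ e : Fin n → ℕ, 0 ≤ ∏ i, y i ^ e i := fun e =>
    prod_nonneg fun i _ => pow_nonneg (hy i) _
  have hsmul : binomial j k c₁ c₂ (fun i => (y i : ℂ)) =
      (∏ i, y i ^ j i) • c₁ + (∏ i, y i ^ k i) • c₂ := by
    simp only [binomial, real_smul]; push_cast; ring
  rw [hsmul, ((h.nonneg_smul_left (hprod j)).nonneg_smul_right (hprod k)).norm_add, norm_smul,
    norm_smul, Real.norm_of_nonneg (hprod j), Real.norm_of_nonneg (hprod k), binomial]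
  ring

end Binomial

theorem mul_exp_mul_I_pow (z : ℂ) (θ : ℝ) (m : ℕ) :
    z * exp (θ * I) ^ m = ‖z‖ * exp ((arg z + m * θ : ℝ) * I) := by
  conv_lhs => rw [← norm_mul_exp_arg_mul_I z]
  rw [← exp_nat_mul, mul_assoc, ← exp_add]
  push_cast; ring_nf

theorem exists_sameRay_mul_pow (a b : ℂ) {m m' : ℕ} (h : m ≠ m') :
    ∃ c : ℂ, ‖c‖ = 1 ∧ SameRay ℝ (a * c ^ m) (b * c ^ m') := by
  set θ : ℝ := (arg b - arg a) / (m - m')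
  have hm : (m : ℝ) - m' ≠ 0 := sub_ne_zero.mpr (Nat.cast_injective.ne h)
  have hphase : arg b + m' * θ = arg a + m * θ := by
    simp only [θ]; field_simp; ring
  refine ⟨exp (θ * I), norm_exp_ofReal_mul_I θ, ?_⟩
  rw [mul_exp_mul_I_pow, mul_exp_mul_I_pow, hphase, ← real_smul, ← real_smul]
  exact (SameRay.sameRay_nonneg_smul_left _ (norm_nonneg a)).nonneg_smul_right (norm_nonneg b)

section EuclNorm

variable {n : ℕ}

theorem continuous_euclNormR : Continuous (euclNormR (n := n)) := by
  unfold euclNormR; fun_prop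

theorem abs_le_euclNormR (y : Fin n → ℝ) (i : Fin n) : |y i| ≤ euclNormR y :=
  Real.abs_le_sqrt (single_le_sum (fun i _ => sq_nonneg (y i)) (mem_univ i))

theorem euclNormR_abs (y : Fin n → ℝ) : euclNormR (fun i => |y i|) = euclNormR y := by
  simp only [euclNormR, sq_abs]

theorem euclNorm_eq_euclNormR_norm (x : Fin n → ℂ) : euclNorm x = euclNormR (fun i => ‖x i‖) :=
  rfl

theorem euclNorm_mul_of_norm_eq_one (x : Fin n → ℂ) {u : Fin n → ℂ} (hu : ∀ i, ‖u i‖ = 1) :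
    euclNorm (fun i => x i * u i) = euclNorm x := by
  simp only [euclNorm, norm_mul, hu, mul_one]

theorem euclNorm_ofReal (y : Fin n → ℝ) : euclNorm (fun i => (y i : ℂ)) = euclNormR y := by
  simp only [euclNorm_eq_euclNormR_norm, norm_real, Real.norm_eq_abs, euclNormR_abs]

def nonnegUnitSphere (n : ℕ) : Set (Fin n → ℝ) := {y | (∀ i, 0 ≤ y i) ∧ euclNormR y = 1}

theorem isCompact_nonnegUnitSphere : IsCompact (nonnegUnitSphere n) := by
  refine Metric.isCompact_of_isClosed_isBounded ?_ ?_
  · simp only [nonnegUnitSphere, Set.ofPred_and, Set.ofPred_forall]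
    exact (isClosed_iInter fun i => isClosed_le continuous_const (continuous_apply i)).inter
      (isClosed_eq continuous_euclNormR continuous_const)
  · refine (Metric.isBounded_closedBall (x := 0) (r := 1)).subset fun y hy => ?_
    rw [mem_closedBall_zero_iff, pi_norm_le_iff_of_nonneg zero_le_one]
    exact fun i => hy.2 ▸ abs_le_euclNormR y i

theorem nonnegUnitSphere_nonempty (hn : 0 < n) : (nonnegUnitSphere n).Nonempty :=
  ⟨Pi.single ⟨0, hn⟩ 1, fun i => by simp [Pi.single_apply, apply_ite], by
    simp [euclNormR, Pi.single_apply]⟩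

theorem specC_eq_of_forall_le_of_eq {f : (Fin n → ℂ) → ℂ} {M : ℝ}
    (hle : ∀ x, euclNorm x = 1 → ‖f x‖ ≤ M) {x₀ : Fin n → ℂ} (hx₀ : euclNorm x₀ = 1)
    (heq : ‖f x₀‖ = M) : specC f = M :=
  IsGreatest.csSup_eq ⟨⟨x₀, hx₀, heq.symm⟩, by rintro _ ⟨x, hx, rfl⟩; exact hle x hx⟩

theorem specR_eq_of_forall_le_of_eq {f : (Fin n → ℝ) → ℝ} {M : ℝ}
    (hle : ∀ x, euclNormR x = 1 → |f x| ≤ M) {x₀ : Fin n → ℝ} (hx₀ : euclNormR x₀ = 1)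
    (heq : |f x₀| = M) : specR f = M :=
  IsGreatest.csSup_eq ⟨⟨x₀, hx₀, heq.symm⟩, by rintro _ ⟨x, hx, rfl⟩; exact hle x hx⟩

end EuclNorm

theorem norm_binomial_le_of_isMaxOn {n : ℕ} {j k : Fin n → ℕ} {A B : ℝ} {y : Fin n → ℝ}
    (hy : IsMaxOn (binomial j k A B) (nonnegUnitSphere n) y) {𝕜 : Type*} [NormedField 𝕜]
    {c₁ c₂ : 𝕜} (h₁ : ‖c₁‖ = A) (h₂ : ‖c₂‖ = B) {x : Fin n → 𝕜}
    (hx : euclNormR (fun i => ‖x i‖) = 1) :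
    ‖binomial j k c₁ c₂ x‖ ≤ binomial j k A B y := by
  subst h₁ h₂
  exact (norm_binomial_le j k c₁ c₂ x).trans (hy ⟨fun i => norm_nonneg _, hx⟩)

theorem stmt17_general {n : ℕ} (hn : 2 ≤ n) (j k : Fin n → ℕ) (hjk : j ≠ k) (a b : ℂ) :
    specC (fun x : Fin n → ℂ => a * ∏ i, x i ^ j i + b * ∏ i, x i ^ k i) =
      specC (fun x : Fin n → ℂ =>
        (‖a‖ : ℂ) * ∏ i, x i ^ j i + (‖b‖ : ℂ) * ∏ i, x i ^ k i) ∧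
    specC (fun x : Fin n → ℂ =>
        (‖a‖ : ℂ) * ∏ i, x i ^ j i + (‖b‖ : ℂ) * ∏ i, x i ^ k i) =
      specR (fun y : Fin n → ℝ =>
        ‖a‖ * ∏ i, y i ^ j i + ‖b‖ * ∏ i, y i ^ k i) ∧
    ∃ y : Fin n → ℝ, (∀ i, 0 ≤ y i) ∧ euclNormR y = 1 ∧
      ‖a‖ * ∏ i, y i ^ j i + ‖b‖ * ∏ i, y i ^ k i =
        specC (fun x : Fin n → ℂ =>
          (‖a‖ : ℂ) * ∏ i, x i ^ j i + (‖b‖ : ℂ) * ∏ i, x i ^ k i) := by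
  obtain ⟨y, ⟨hy0, hy1⟩, hmax⟩ := isCompact_nonnegUnitSphere.exists_isMaxOn
    (nonnegUnitSphere_nonempty (by omega)) (continuous_binomial j k ‖a‖ ‖b‖).continuousOn
  have hA : ‖(‖a‖ : ℂ)‖ = ‖a‖ := by simp
  have hB : ‖(‖b‖ : ℂ)‖ = ‖b‖ := by simp
  obtain ⟨i₀, hi₀⟩ := Function.ne_iff.mp hjk
  obtain ⟨c, hc, hray⟩ := exists_sameRay_mul_pow a b hi₀
  have hyC : euclNorm (fun i => (y i : ℂ)) = 1 := (euclNorm_ofReal y).trans hy1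
  have hf : specC (binomial j k a b) = binomial j k ‖a‖ ‖b‖ y := by
    refine specC_eq_of_forall_le_of_eq
      (fun x hx => norm_binomial_le_of_isMaxOn hmax rfl rfl hx)
      (x₀ := fun i => y i * (Pi.mulSingle i₀ c : Fin n → ℂ) i) ?_ ?_
    · exact (euclNorm_mul_of_norm_eq_one _ fun i => by
        by_cases hi : i = i₀ <;> simp [hi, hc]).trans hyC
    · rw [binomial_mul_mulSingle, norm_binomial_ofReal_of_sameRay j k hray hy0]
      simp [hc]
  have hg : specC (binomial j k (‖a‖ : ℂ) ‖b‖) = binomial j k ‖a‖ ‖b‖ y := by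
    refine specC_eq_of_forall_le_of_eq
      (fun x hx => norm_binomial_le_of_isMaxOn hmax hA hB hx) hyC ?_
    have hsame : SameRay ℝ (‖a‖ : ℂ) (‖b‖ : ℂ) :=
      sameRay_iff.2 (Or.inr (Or.inr (by simp [arg_ofReal_of_nonneg])))
    rw [norm_binomial_ofReal_of_sameRay j k hsame hy0, hA, hB]
  have hR : specR (binomial j k ‖a‖ ‖b‖) = binomial j k ‖a‖ ‖b‖ y := by
    refine specR_eq_of_forall_le_of_eq (fun w hw => ?_) hy1
      (abs_of_nonneg (binomial_nonneg j k (norm_nonneg a) (norm_nonneg b) hy0))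
    rw [← euclNormR_abs] at hw
    simpa only [Real.norm_eq_abs] using norm_binomial_le_of_isMaxOn hmax
      (Real.norm_of_nonneg (norm_nonneg a)) (Real.norm_of_nonneg (norm_nonneg b)) hw
  exact ⟨hf.trans hg.symm, hg.trans hR.symm, y, hy0, hy1, hg.symm⟩

/-- For `f = a x^j + b x^k` a sum of two distinct monomials of degree `d`, the complex
spectral norm of `f` equals that of `g = |a| x^j + |b| x^k`, which equals the real spectral
norm of `g` and is attained at a componentwise nonnegative unit vector. -/
theorem stmt17 {n d : ℕ} (hn : 2 ≤ n) (hd : 2 ≤ d) (j k : Fin n → ℕ) (hjk : j ≠ k)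
    (hj : ∑ i, j i = d) (hk : ∑ i, k i = d) (a b : ℂ) :
    specC (fun x : Fin n → ℂ => a * ∏ i, x i ^ j i + b * ∏ i, x i ^ k i) =
      specC (fun x : Fin n → ℂ =>
        (‖a‖ : ℂ) * ∏ i, x i ^ j i + (‖b‖ : ℂ) * ∏ i, x i ^ k i) ∧
    specC (fun x : Fin n → ℂ =>
        (‖a‖ : ℂ) * ∏ i, x i ^ j i + (‖b‖ : ℂ) * ∏ i, x i ^ k i) =
      specR (fun y : Fin n → ℝ =>
        ‖a‖ * ∏ i, y i ^ j i + ‖b‖ * ∏ i, y i ^ k i) ∧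
    ∃ y : Fin n → ℝ, (∀ i, 0 ≤ y i) ∧ euclNormR y = 1 ∧
      ‖a‖ * ∏ i, y i ^ j i + ‖b‖ * ∏ i, y i ^ k i =
        specC (fun x : Fin n → ℂ =>
          (‖a‖ : ℂ) * ∏ i, x i ^ j i + (‖b‖ : ℂ) * ∏ i, x i ^ k i) :=
  stmt17_general hn j k hjk a b
end
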